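/- Let I be a finitely generated ideal of R = ℂ⟦z₁,…,z_m⟧ and let Ĩ be the ideal of ℂ⟦x₁,…,x_n,z₁,…,z_m⟧ generated by the image of I. Let a₁,…,a_{n−1}, b ∈ ℂ⟦x,z⟧. If f₁, f₂ ∈ ℂ⟦x,z⟧ both satisfy ∂f_j/∂x_n + Σ_{i=1}^{n−1} a_i ∂f_j/∂x_i ≡ b (mod Ĩ) for j = 1, 2, and f₁ − f₂ ∈ Ĩ + (x_n), then f₁ − f₂ ∈ Ĩ. In other words, the Cauchy problem ∂f/∂x_n + Σ a_i ∂f/∂x_i = b with prescribed class of f modulo (x_n) has at most one solution in the quotient ring ℂ⟦x,z⟧/Ĩ. -/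

import Mathlib

/-!
Since `I` is finitely generated, membership in `Ĩ` can be tested coefficientwise. For
`g = f₁ - f₂`, the coefficient of `x^β` in `∂g/∂x_n + Σ aᵢ ∂g/∂xᵢ` is `(β_n + 1)` times the
coefficient of `x^(β + e_n)` in `g`, plus terms that only involve coefficients of `g` of
`x_n`-degree at most `β_n`. As `β_n + 1` is invertible in characteristic zero, induction on the
`x_n`-degree, starting from `g ∈ Ĩ + (x_n)`, puts every coefficient of `g` in `I`.
-/

noncomputable def mvDeriv {σ R : Type*} [CommRing R] (i : σ)
    (f : MvPowerSeries σ R) : MvPowerSeries σ R :=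
  fun α => (α i + 1 : ℕ) • MvPowerSeries.coeff (R := R) (α + Finsupp.single i 1) f

open MvPowerSeries Finsupp

lemma Ideal.mem_of_succ_nsmul_mem {R : Type*} [CommRing R] [Algebra ℚ R] {I : Ideal R}
    {k : ℕ} {x : R} (h : (k + 1) • x ∈ I) : x ∈ I := by
  have hunit : IsUnit ((k + 1 : ℕ) : R) := by
    simpa using (Nat.cast_add_one_ne_zero (R := ℚ) k).isUnit.map (algebraMap ℚ R)
  rwa [nsmul_eq_mul, Ideal.unit_mul_mem_iff_mem I hunit] at h

namespace MvPowerSeries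

variable {σ R : Type*} [CommRing R]

lemma coeff_mvDeriv (i : σ) (f : MvPowerSeries σ R) (α : σ →₀ ℕ) :
    coeff α (mvDeriv i f) = (α i + 1) • coeff (α + single i 1) f := rfl

lemma mvDeriv_sub (i : σ) (f g : MvPowerSeries σ R) :
    mvDeriv i (f - g) = mvDeriv i f - mvDeriv i g := by
  ext α
  simp only [coeff_mvDeriv, map_sub, smul_sub]

variable (σ) in
def coeffIdeal (I : Ideal R) : Ideal (MvPowerSeries σ R) where
  carrier := {f | ∀ α, coeff α f ∈ I}
  zero_mem' α := by simp
  add_mem' hf hg α := by simpa using I.add_mem (hf α) (hg α)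
  smul_mem' c f hf α := by
    classical
    rw [smul_eq_mul, coeff_mul]
    exact I.sum_mem fun p _ => I.mul_mem_left _ (hf p.2)

lemma map_C_le_coeffIdeal (I : Ideal R) : I.map (C (σ := σ)) ≤ coeffIdeal σ I := by
  classical
  refine Ideal.map_le_iff_le_comap.mpr fun r hr α => ?_
  rw [coeff_C]
  split_ifs
  exacts [hr, I.zero_mem]

lemma coeffIdeal_le_map_C {I : Ideal R} (hI : I.FG) : coeffIdeal σ I ≤ I.map (C (σ := σ)) := by
  intro f hf
  obtain ⟨s, rfl⟩ := hI
  have hc : ∀ α, ∃ c : R → R, ∑ r ∈ s, c r • r = coeff α f :=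
    fun α => (Submodule.mem_span_finset.mp (hf α)).imp fun _ h => h.2
  choose c hc using hc
  let h : R → MvPowerSeries σ R := fun r α => c α r
  have hf : f = ∑ r ∈ s, h r * C r := by
    ext α
    simpa [coeff_mul_C, smul_eq_mul, show ∀ r, coeff α (h r) = c α r from fun _ => rfl]
      using (hc α).symm
  rw [hf]
  exact Ideal.sum_mem _ fun r hr => Ideal.mul_mem_left _ _
    (Ideal.mem_map_of_mem _ (Ideal.subset_span hr))

lemma map_C_eq_coeffIdeal {I : Ideal R} (hI : I.FG) : I.map (C (σ := σ)) = coeffIdeal σ I :=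
  (map_C_le_coeffIdeal I).antisymm (coeffIdeal_le_map_C hI)

lemma coeff_mem_of_mem_coeffIdeal_sup_span_X {I : Ideal R} {t : σ} {f : MvPowerSeries σ R}
    (hf : f ∈ coeffIdeal σ I ⊔ Ideal.span {X t}) {α : σ →₀ ℕ} (hα : α t = 0) :
    coeff α f ∈ I := by
  obtain ⟨p, hp, q, hq, rfl⟩ := Submodule.mem_sup.mp hf
  rw [map_add, X_dvd_iff.mp (Ideal.mem_span_singleton.mp hq) α hα, add_zero]
  exact hp α

variable {I : Ideal R} {t : σ}

lemma coeff_mul_mvDeriv_mem {v : σ} (hv : v ≠ t) (a : MvPowerSeries σ R)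
    {g : MvPowerSeries σ R} {β : σ →₀ ℕ} (hg : ∀ γ : σ →₀ ℕ, γ t ≤ β t → coeff γ g ∈ I) :
    coeff β (a * mvDeriv v g) ∈ I := by
  classical
  rw [coeff_mul]
  refine I.sum_mem fun p hp => I.mul_mem_left _ (I.smul_of_tower_mem _ (hg _ ?_))
  have hpt : p.1 t + p.2 t = β t := by
    rw [← Finsupp.add_apply, Finset.HasAntidiagonal.mem_antidiagonal.mp hp]
  rw [Finsupp.add_apply, single_eq_of_ne' hv, add_zero]
  omega

theorem coeff_mem_of_transport_mem [Algebra ℚ R] {ι : Type*} (s : Finset ι) (v : ι → σ)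
    (hv : ∀ i ∈ s, v i ≠ t) (a : ι → MvPowerSeries σ R) {g : MvPowerSeries σ R}
    (htransport : mvDeriv t g + ∑ i ∈ s, a i * mvDeriv (v i) g ∈ coeffIdeal σ I)
    (hinit : ∀ α : σ →₀ ℕ, α t = 0 → coeff α g ∈ I) : g ∈ coeffIdeal σ I := by
  intro α
  induction hk : α t using Nat.strong_induction_on generalizing α with
  | _ k ih =>
    rcases k with _ | k
    · exact hinit α hk
    set β := α - single t 1
    have hβα : β + single t 1 = α := tsub_add_cancel_of_le (single_le_iff.mpr (by omega))
    have hβ : β t = k := by simp [β, hk]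
    have hsum : coeff β (∑ i ∈ s, a i * mvDeriv (v i) g) ∈ I := by
      rw [map_sum]
      exact I.sum_mem fun i hi =>
        coeff_mul_mvDeriv_mem (hv i hi) _ fun γ hγ => ih (γ t) (by omega) γ rfl
    have hstep := I.sub_mem (htransport β) hsum
    rw [map_add, add_sub_cancel_right, coeff_mvDeriv, hβα, hβ] at hstep
    exact Ideal.mem_of_succ_nsmul_mem hstep

end MvPowerSeries

/-- Let `I` be a finitely generated ideal of `R = ℂ⟦z₁,…,z_m⟧` and let `Ĩ` be the
ideal of `ℂ⟦x₁,…,x_n,z₁,…,z_m⟧` generated by the image of `I` (the `x`-variables are indexed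
by `Fin (n+1)`, the last playing the role of `x_n`).  Let `a₁,…,a_{n−1}, b ∈ ℂ⟦x,z⟧`.
If `f₁, f₂` both satisfy `∂f_j/∂x_n + Σᵢ aᵢ ∂f_j/∂xᵢ ≡ b (mod Ĩ)` and
`f₁ − f₂ ∈ Ĩ + (x_n)`, then `f₁ − f₂ ∈ Ĩ`: the Cauchy problem has at most one solution in
`ℂ⟦x,z⟧/Ĩ`. -/
theorem cauchy_problem_uniqueness_mod_ideal
    (n m : ℕ) (I : Ideal (MvPowerSeries (Fin m) ℂ)) (hI : I.FG)
    (a : Fin n → MvPowerSeries (Fin (n + 1)) (MvPowerSeries (Fin m) ℂ))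
    (b f₁ f₂ : MvPowerSeries (Fin (n + 1)) (MvPowerSeries (Fin m) ℂ))
    (h₁ : mvDeriv (Fin.last n) f₁ + ∑ i : Fin n, a i * mvDeriv i.castSucc f₁ - b ∈
      I.map (MvPowerSeries.C (σ := Fin (n + 1)) (R := MvPowerSeries (Fin m) ℂ)))
    (h₂ : mvDeriv (Fin.last n) f₂ + ∑ i : Fin n, a i * mvDeriv i.castSucc f₂ - b ∈
      I.map (MvPowerSeries.C (σ := Fin (n + 1)) (R := MvPowerSeries (Fin m) ℂ)))
    (hinit : f₁ - f₂ ∈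
      I.map (MvPowerSeries.C (σ := Fin (n + 1)) (R := MvPowerSeries (Fin m) ℂ)) ⊔
        Ideal.span {MvPowerSeries.X (R := MvPowerSeries (Fin m) ℂ) (Fin.last n)}) :
    f₁ - f₂ ∈ I.map (MvPowerSeries.C (σ := Fin (n + 1)) (R := MvPowerSeries (Fin m) ℂ)) := by
  rw [map_C_eq_coeffIdeal hI] at h₁ h₂ hinit ⊢
  have htransport : mvDeriv (Fin.last n) (f₁ - f₂)
      + ∑ i : Fin n, a i * mvDeriv i.castSucc (f₁ - f₂) ∈ coeffIdeal (Fin (n + 1)) I := by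
    convert sub_mem h₁ h₂ using 1
    simp only [mvDeriv_sub, mul_sub, Finset.sum_sub_distrib]
    ring
  exact coeff_mem_of_transport_mem Finset.univ Fin.castSucc
    (fun i _ => (Fin.castSucc_lt_last i).ne) a htransport
    fun α hα => coeff_mem_of_mem_coeffIdeal_sup_span_X hinit hα
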